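/- arXiv:1112.2216 — 4 statements merged into one kernel-verified Lean document; each statement's English description precedes it below -/
import Mathlib

section
/- In the symmetric group S_n (type A_{n-1} Weyl group), for 1 ≤ i < j ≤ n, there is an edge w → w·(i,j) in the quantum Bruhat graph if and only if there is no k with i < k < j such that w(i) ≺ w(k) ≺ w(j), where ≺ is the circular order on {1,…,n} starting at w(i). -/
/-- Coxeter length of a permutation of `Fin n`: the number of inversions. -/
def invLen {n : ℕ} (w : Equiv.Perm (Fin n)) : ℕ :=
  ((Finset.univ : Finset (Fin n × Fin n)).filter (fun p => p.1 < p.2 ∧ w p.2 < w p.1)).card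

/-- Position of `b` in the circular (clockwise) order on `Fin n` starting at `a`. -/
def circDist {n : ℕ} (a b : Fin n) : ℕ := (b.val + n - a.val) % n

/-- Edge `w → w t_{ij}` of the quantum Bruhat graph of `S_n`:
either a Bruhat cover `ℓ(w t_{ij}) = ℓ(w)+1`, or a quantum edge
`ℓ(w t_{ij}) = ℓ(w) - 2(j-i) + 1` (since `⟨ρ, α_{ij}^∨⟩ = j - i`). -/
def qbEdgeA {n : ℕ} (w : Equiv.Perm (Fin n)) (i j : Fin n) : Prop :=
  invLen (w * Equiv.swap i j) = invLen w + 1 ∨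
    (invLen (w * Equiv.swap i j) : ℤ) = (invLen w : ℤ) - 2 * ((j : ℤ) - (i : ℤ)) + 1

/-! For `i < j` with `w i < w j`, only the pairs of positions meeting `{i, j}` can change
their inversion status under `w ↦ w t_{ij}`. The pair `(i, j)` becomes an inversion, and for
any other `k` the four pairs formed with `i` and `j` gain two inversions exactly when
`i < k < j` and `w i < w k < w j`, and none otherwise. So `ℓ(w t_{ij}) = ℓ(w) + 1 + 2 m` with
`m` the number of such `k`: an ascent gives an edge iff `m = 0`. For a descent, the same count
applied to `w t_{ij}` makes the length drop by `1 + 2 m'`, which is `2(j - i) - 1` iff all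
`j - i - 1` values `w k` with `i < k < j` lie between `w j` and `w i`. Read circularly from
`w i`, both conditions say that no `w k` lies between `w i` and `w j`. -/

open Finset

theorem Finset.sum_sum_eq_of_eq_zero_outside {α M : Type*} [Fintype α] [DecidableEq α]
    [AddCommMonoid M] (s : Finset α) (f : α → α → M) (hf : ∀ p ∉ s, ∀ q ∉ s, f p q = 0) :
    ∑ p, ∑ q, f p q = ∑ p ∈ s, ∑ q ∈ s, f p q + ∑ k ∈ sᶜ, ∑ p ∈ s, (f p k + f k p) := by
  have houtside : ∑ p ∈ sᶜ, ∑ q, f p q = ∑ p ∈ sᶜ, ∑ q ∈ s, f p q := by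
    refine sum_congr rfl fun p hp => ?_
    rw [← sum_add_sum_compl s, sum_eq_zero fun q hq => hf p (mem_compl.1 hp) q (mem_compl.1 hq),
      add_zero]
  simp only [sum_add_distrib]
  rw [sum_comm (s := sᶜ) (t := s) (f := fun k p => f p k), ← sum_add_sum_compl s, houtside,
    sum_congr rfl fun p _ => (sum_add_sum_compl s (f p)).symm, sum_add_distrib, add_assoc]

theorem invLen_eq_sum {n : ℕ} (w : Equiv.Perm (Fin n)) :
    (invLen w : ℤ) = ∑ p, ∑ q, if p < q ∧ w q < w p then 1 else 0 := by
  rw [invLen, card_filter, ← Fintype.sum_prod_type']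
  push_cast
  rfl

theorem invLen_mul_swap_of_lt {n : ℕ} (w : Equiv.Perm (Fin n)) {i j : Fin n} (hij : i < j)
    (hw : w i < w j) :
    invLen (w * Equiv.swap i j) =
      invLen w + 1 + 2 * #((Ioo i j).filter fun k => w i < w k ∧ w k < w j) := by
  let f : Fin n → Fin n → ℤ := fun p q =>
    (if p < q ∧ w (Equiv.swap i j q) < w (Equiv.swap i j p) then 1 else 0) -
      (if p < q ∧ w q < w p then 1 else 0)
  have hdiff : (invLen (w * Equiv.swap i j) : ℤ) - invLen w = ∑ p, ∑ q, f p q := by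
    rw [invLen_eq_sum, invLen_eq_sum, ← sum_sub_distrib]
    exact sum_congr rfl fun p _ => (sum_sub_distrib _ _).symm
  have houtside : ∀ p ∉ ({i, j} : Finset _), ∀ q ∉ ({i, j} : Finset _), f p q = 0 := by
    intro p hp q hq
    simp only [mem_insert, mem_singleton, not_or] at hp hq
    simp [f, Equiv.swap_apply_of_ne_of_ne, hp, hq]
  have hpair : ∑ p ∈ {i, j}, ∑ q ∈ {i, j}, f p q = 1 := by
    simp only [f, sum_pair hij.ne, Equiv.swap_apply_left, Equiv.swap_apply_right,
      lt_self_iff_false, and_self, if_false, sub_self, zero_add, add_zero]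
    split_ifs <;> omega
  have hcross : ∀ k ∈ ({i, j} : Finset _)ᶜ, ∑ p ∈ {i, j}, (f p k + f k p) =
      2 * if k ∈ Ioo i j ∧ w i < w k ∧ w k < w j then 1 else 0 := by
    intro k hk
    simp only [mem_compl, mem_insert, mem_singleton, not_or] at hk
    have hki := w.injective.ne hk.1
    have hkj := w.injective.ne hk.2
    simp only [f, sum_pair hij.ne, Equiv.swap_apply_left, Equiv.swap_apply_right,
      Equiv.swap_apply_of_ne_of_ne hk.1 hk.2, mem_Ioo]
    split_ifs <;> omega
  have hintermediate :
      ({i, j} : Finset _)ᶜ.filter (fun k => k ∈ Ioo i j ∧ w i < w k ∧ w k < w j) =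
      (Ioo i j).filter fun k => w i < w k ∧ w k < w j := by
    ext k
    simp only [mem_filter, mem_compl, mem_insert, mem_singleton, mem_Ioo]
    constructor
    · exact fun h => h.2
    · exact fun h => ⟨by omega, h⟩
  rw [sum_sum_eq_of_eq_zero_outside _ _ houtside, hpair, sum_congr rfl hcross, ← mul_sum,
    sum_boole, hintermediate] at hdiff
  omega

theorem circDist_of_le {n : ℕ} {a b : Fin n} (h : a ≤ b) : circDist a b = b - a := by
  rw [circDist, show (b : ℕ) + n - a = n + (b - a) by omega, Nat.add_mod_left,
    Nat.mod_eq_of_lt (by omega)]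

theorem circDist_of_lt {n : ℕ} {a b : Fin n} (h : b < a) : circDist a b = b + n - a :=
  Nat.mod_eq_of_lt (by omega)

theorem circDist_pos_and_lt_iff_of_lt {n : ℕ} {a b c : Fin n} (hab : a < b) :
    0 < circDist a c ∧ circDist a c < circDist a b ↔ a < c ∧ c < b := by
  rw [circDist_of_le hab.le]
  rcases le_or_gt a c with hac | hca
  · rw [circDist_of_le hac]; omega
  · rw [circDist_of_lt hca]; omega

theorem circDist_pos_and_lt_iff_of_gt {n : ℕ} {a b c : Fin n} (hba : b < a) :
    0 < circDist a c ∧ circDist a c < circDist a b ↔ a < c ∨ c < b := by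
  rw [circDist_of_lt hba]
  rcases le_or_gt a c with hac | hca
  · rw [circDist_of_le hac]; omega
  · rw [circDist_of_lt hca]; omega

theorem qbEdgeA_iff_of_lt {n : ℕ} {w : Equiv.Perm (Fin n)} {i j : Fin n} (hij : i < j)
    (hw : w i < w j) : qbEdgeA w i j ↔ ∀ k ∈ Ioo i j, ¬(w i < w k ∧ w k < w j) := by
  rw [qbEdgeA, invLen_mul_swap_of_lt w hij hw, ← card_filter_eq_zero_iff]
  push_cast
  omega

theorem qbEdgeA_iff_of_gt {n : ℕ} {w : Equiv.Perm (Fin n)} {i j : Fin n} (hij : i < j)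
    (hw : w j < w i) : qbEdgeA w i j ↔ ∀ k ∈ Ioo i j, w j < w k ∧ w k < w i := by
  set v := w * Equiv.swap i j with hv_def
  have hvw : v * Equiv.swap i j = w := by simp [v, mul_assoc]
  have hv : v i < v j := by simpa [v] using hw
  have hfilter : (Ioo i j).filter (fun k => v i < v k ∧ v k < v j) =
      (Ioo i j).filter fun k => w j < w k ∧ w k < w i := by
    refine filter_congr fun k hk => ?_
    rw [mem_Ioo] at hk
    simp [v, Equiv.swap_apply_of_ne_of_ne hk.1.ne' hk.2.ne]
  have hlen := invLen_mul_swap_of_lt v hij hv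
  rw [hvw, hfilter] at hlen
  rw [qbEdgeA, ← hv_def, hlen, ← card_filter_eq_iff, Fin.card_Ioo]
  omega

/-- Quantum Bruhat graph criterion in type `A`: for `i < j`, there is an edge
`w → w (i,j)` iff there is no `k` with `i < k < j` and `w(i) ≺ w(k) ≺ w(j)`
in the circular order starting at `w(i)`. -/
theorem qbEdgeA_iff_no_intermediate {n : ℕ} (w : Equiv.Perm (Fin n)) (i j : Fin n)
    (hij : i < j) :
    qbEdgeA w i j ↔
      ¬ ∃ k : Fin n, i < k ∧ k < j ∧
        0 < circDist (w i) (w k) ∧ circDist (w i) (w k) < circDist (w i) (w j) := by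
  rcases lt_or_gt_of_ne (w.injective.ne hij.ne) with hw | hw
  · simp only [qbEdgeA_iff_of_lt hij hw, circDist_pos_and_lt_iff_of_lt hw, mem_Ioo, not_exists,
      not_and, and_imp]
  · simp only [qbEdgeA_iff_of_gt hij hw, circDist_pos_and_lt_iff_of_gt hw, mem_Ioo, not_exists,
      not_and, and_imp, not_or, not_lt]
    refine forall_congr' fun k => imp_congr_right fun hik => imp_congr_right fun hkj => ?_
    have hwki := w.injective.ne hik.ne'
    have hwkj := w.injective.ne hkj.ne
    constructor <;> intro <;> omega
end

section
/- Let g : [0, n + 1/2] → ℝ be a continuous piecewise-linear function with g(0) = −1/2 and slopes ±1 on each half-integer interval, encoded by a sequence (σ_1,…,σ_{n+1}) with σ_j = (σ_{j,1}, σ_{j,2}) ∈ {±1}² for j ≤ n (slope σ_{j,1} on (j−1, j−1/2) and σ_{j,2} on (j−1/2, j)) and σ_{n+1} ∈ {±1} (slope on (n, n+1/2)). Assume (C1) σ_{1,1} = 1 and (C2) σ_{j,2} = 1 ⟹ σ_{j+1,1} = 1 for all j. Then, with M = max g: every x with g(x) = M has the form m + 1/2 with 0 ≤ m ≤ n integer,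 the segment after x has σ_{m+1} ∈ {(1,−1), 1}, and M is a nonnegative integer. -/
/-- The slope data: `σ_j = (σ_{j,1}, σ_{j,2})` for `1 ≤ j ≤ n` (0-indexed here) and the
final single slope `σ_{n+1} = σlast`. -/
def sigFull (n : ℕ) (σ : Fin n → ℤ × ℤ) (σlast : ℤ) (j : ℕ) : ℤ × ℤ :=
  if h : j < n then σ ⟨j, h⟩ else (σlast, σlast)

/-- The slope of `g` on the half-integer interval `(t/2, (t+1)/2)`:
`σ_{j,1}` on `(j-1, j-1/2)` and `σ_{j,2}` on `(j-1/2, j)`, and `σ_{n+1}` on `(n, n+1/2)`. -/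
def plSlope (n : ℕ) (σ : Fin n → ℤ × ℤ) (σlast : ℤ) (t : ℕ) : ℤ :=
  if t % 2 = 0 then (sigFull n σ σlast (t / 2)).1 else (sigFull n σ σlast (t / 2)).2

/-- The values of `g` at the half-integer grid points `t/2`, with `g(0) = -1/2`. -/
noncomputable def plVal (n : ℕ) (σ : Fin n → ℤ × ℤ) (σlast : ℤ) : ℕ → ℝ
  | 0 => -1/2
  | t + 1 => plVal n σ σlast t + (plSlope n σ σlast t : ℝ) / 2

/-- The continuous piecewise-linear function `g : [0, n+1/2] → ℝ` with `g(0) = -1/2`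
encoded by the slope sequence `(σ_1, …, σ_n, σ_{n+1})`. -/
noncomputable def plFun (n : ℕ) (σ : Fin n → ℤ × ℤ) (σlast : ℤ) (x : ℝ) : ℝ :=
  let t : ℕ := (⌊2 * x⌋).toNat
  plVal n σ σlast t + (x - t / 2) * (plSlope n σ σlast t : ℝ)

/-!
On each half-integer cell `g` interpolates linearly between its grid values, and a slope `±1` is
never `0`, so a maximiser is a grid point `t/2`. The maximum is attained neither at `0` (as
`g(1/2) = 0` by (C1)) nor at an integer `k ≥ 1`: the slope before `k` must be `1`, and then (C2)
makes the slope after `k` equal to `1` as well. So a maximiser is some `m + 1/2`, where the slope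
must be `1` before and `-1` after. Finally `2 g(t/2)` is an integer of the parity of `t + 1`,
so `g(m + 1/2)` is an integer, and it is nonnegative because `g(1/2) = 0`.
-/

section

variable {n : ℕ} {σ : Fin n → ℤ × ℤ} {σlast : ℤ}

lemma plVal_succ (t : ℕ) :
    plVal n σ σlast (t + 1) = plVal n σ σlast t + (plSlope n σ σlast t : ℝ) / 2 :=
  rfl

lemma plSlope_two_mul (m : ℕ) : plSlope n σ σlast (2 * m) = (sigFull n σ σlast m).1 := by
  simp [plSlope]

lemma plSlope_two_mul_add_one (m : ℕ) :
    plSlope n σ σlast (2 * m + 1) = (sigFull n σ σlast m).2 := by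
  simp [plSlope, Nat.add_mod, Nat.add_div]

lemma plSlope_eq_one_or_neg_one
    (hσ : ∀ j : Fin n, ((σ j).1 = 1 ∨ (σ j).1 = -1) ∧ ((σ j).2 = 1 ∨ (σ j).2 = -1))
    (hlast : σlast = 1 ∨ σlast = -1) (t : ℕ) :
    plSlope n σ σlast t = 1 ∨ plSlope n σ σlast t = -1 := by
  unfold plSlope sigFull
  split_ifs
  exacts [(hσ _).1, hlast, (hσ _).2, hlast]

lemma plFun_eq_of_floor_eq {x : ℝ} {t : ℕ} (ht : ⌊2 * x⌋ = t) :
    plFun n σ σlast x =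
      plVal n σ σlast t + (2 * x - t) * (plVal n σ σlast (t + 1) - plVal n σ σlast t) := by
  simp only [plFun, ht, Int.toNat_natCast, plVal_succ]
  ring

lemma plFun_half (t : ℕ) : plFun n σ σlast (t / 2) = plVal n σ σlast t := by
  rw [plFun_eq_of_floor_eq (t := t) (by rw [mul_div_cancel₀ _ two_ne_zero, Int.floor_natCast])]
  ring

lemma plFun_nat_add_half (m : ℕ) : plFun n σ σlast (m + 1 / 2) = plVal n σ σlast (2 * m + 1) := by
  rw [← plFun_half]
  push_cast
  ring_nf

lemma half_mem_Icc {t : ℕ} (ht : t ≤ 2 * n + 1) : (t / 2 : ℝ) ∈ Set.Icc 0 ((n : ℝ) + 1 / 2) := by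
  have : (t : ℝ) ≤ 2 * n + 1 := by exact_mod_cast ht
  constructor <;> linarith [(Nat.cast_nonneg t : (0 : ℝ) ≤ t)]

lemma exists_eq_half_of_forall_plVal_le (hslope : ∀ t < 2 * n + 1, plSlope n σ σlast t ≠ 0)
    {x : ℝ} (hx : x ∈ Set.Icc 0 ((n : ℝ) + 1 / 2))
    (hle : ∀ t ≤ 2 * n + 1, plVal n σ σlast t ≤ plFun n σ σlast x) :
    ∃ t ≤ 2 * n + 1, x = t / 2 := by
  obtain ⟨hx0, hxn⟩ := hx
  obtain ⟨t, ht⟩ := Int.eq_ofNat_of_zero_le (Int.floor_nonneg.mpr (by linarith : (0 : ℝ) ≤ 2 * x))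
  have hlo : (t : ℝ) ≤ 2 * x := by exact_mod_cast ht ▸ Int.floor_le (2 * x)
  have hhi : 2 * x < t + 1 := by exact_mod_cast ht ▸ Int.lt_floor_add_one (2 * x)
  have htn : (t : ℝ) ≤ 2 * n + 1 := by linarith
  rcases hlo.eq_or_lt with hx' | hlt
  · exact ⟨t, by exact_mod_cast htn, by linarith⟩
  have htn' : t < 2 * n + 1 := by
    have : (t : ℝ) < 2 * n + 1 := by linarith
    exact_mod_cast this
  have hval := plFun_eq_of_floor_eq (σ := σ) (σlast := σlast) ht
  have ha := hle t htn'.le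
  have hb := hle (t + 1) htn'
  -- `g(x)` is a strict convex combination of the two grid values, so it dominates both only
  -- if they are equal.
  have hflat : plVal n σ σlast (t + 1) = plVal n σ σlast t := by
    apply le_antisymm <;> nlinarith
  refine absurd ?_ (hslope t htn')
  rw [plVal_succ] at hflat
  exact_mod_cast (by linarith : (plSlope n σ σlast t : ℝ) = 0)

lemma plSlope_eq_one_of_plVal_le_succ {t : ℕ}
    (hs : plSlope n σ σlast t = 1 ∨ plSlope n σ σlast t = -1)
    (h : plVal n σ σlast t ≤ plVal n σ σlast (t + 1)) : plSlope n σ σlast t = 1 := by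
  refine hs.resolve_right fun hneg => ?_
  rw [plVal_succ, hneg] at h
  norm_num at h

lemma plSlope_eq_neg_one_of_plVal_succ_le {t : ℕ}
    (hs : plSlope n σ σlast t = 1 ∨ plSlope n σ σlast t = -1)
    (h : plVal n σ σlast (t + 1) ≤ plVal n σ σlast t) : plSlope n σ σlast t = -1 := by
  refine hs.resolve_left fun hpos => ?_
  rw [plVal_succ, hpos] at h
  norm_num at h

lemma plVal_one (hC1 : (sigFull n σ σlast 0).1 = 1) : plVal n σ σlast 1 = 0 := by
  have h0 : plSlope n σ σlast 0 = 1 := by simpa using (plSlope_two_mul (σ := σ) 0).trans hC1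
  rw [plVal_succ, h0]
  norm_num [plVal]

lemma odd_of_forall_plVal_le (hslope : ∀ t, plSlope n σ σlast t = 1 ∨ plSlope n σ σlast t = -1)
    (hC1 : (sigFull n σ σlast 0).1 = 1)
    (hC2 : ∀ j < n, (sigFull n σ σlast j).2 = 1 → (sigFull n σ σlast (j + 1)).1 = 1)
    {t : ℕ} (ht : t ≤ 2 * n + 1) (hle : ∀ s ≤ 2 * n + 1, plVal n σ σlast s ≤ plVal n σ σlast t) :
    Odd t := by
  rcases Nat.even_or_odd' t with ⟨k, rfl | rfl⟩
  swap
  · exact odd_two_mul_add_one k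
  cases k with
  | zero =>
    have := hle 1 (by omega)
    rw [plVal_one hC1] at this
    norm_num [plVal] at this
  | succ j =>
    have hup : plSlope n σ σlast (2 * j + 1) = 1 :=
      plSlope_eq_one_of_plVal_le_succ (hslope _) (hle (2 * j + 1) (by omega))
    have hnext : plSlope n σ σlast (2 * (j + 1)) = 1 := by
      rw [plSlope_two_mul]
      exact hC2 j (by omega) ((plSlope_two_mul_add_one j).symm.trans hup)
    have := plSlope_eq_neg_one_of_plVal_succ_le (hslope _) (hle (2 * (j + 1) + 1) (by omega))
    omega

lemma exists_eq_two_mul_add_one_of_forall_plVal_le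
    (hslope : ∀ t, plSlope n σ σlast t = 1 ∨ plSlope n σ σlast t = -1)
    (hC1 : (sigFull n σ σlast 0).1 = 1)
    (hC2 : ∀ j < n, (sigFull n σ σlast j).2 = 1 → (sigFull n σ σlast (j + 1)).1 = 1)
    {t : ℕ} (ht : t ≤ 2 * n + 1) (hle : ∀ s ≤ 2 * n + 1, plVal n σ σlast s ≤ plVal n σ σlast t) :
    ∃ m ≤ n, t = 2 * m + 1 ∧
      (m < n → sigFull n σ σlast m = (1, -1)) ∧ (m = n → σlast = 1) := by
  obtain ⟨m, rfl⟩ := odd_of_forall_plVal_le hslope hC1 hC2 ht hle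
  have hup : (sigFull n σ σlast m).1 = 1 := by
    rw [← plSlope_two_mul]
    exact plSlope_eq_one_of_plVal_le_succ (hslope _) (hle (2 * m) (by omega))
  refine ⟨m, by omega, rfl, fun hm => Prod.ext hup ?_, fun hm => ?_⟩
  · rw [← plSlope_two_mul_add_one]
    exact plSlope_eq_neg_one_of_plVal_succ_le (hslope _) (hle (2 * m + 2) (by omega))
  · simpa [sigFull, hm] using hup

lemma exists_two_mul_plVal_eq (hslope : ∀ t, plSlope n σ σlast t = 1 ∨ plSlope n σ σlast t = -1)
    (t : ℕ) : ∃ k : ℤ, Odd (k + t) ∧ 2 * plVal n σ σlast t = k := by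
  induction t with
  | zero => exact ⟨-1, by decide, by norm_num [plVal]⟩
  | succ t ih =>
    obtain ⟨k, hodd, hk⟩ := ih
    have hs : Odd (plSlope n σ σlast t) := by rcases hslope t with h | h <;> rw [h] <;> decide
    refine ⟨k + plSlope n σ σlast t, ?_, by rw [plVal_succ, mul_add, hk]; push_cast; ring⟩
    have := (hodd.add_odd hs).add_one
    push_cast
    convert this using 1
    ring

lemma exists_plVal_two_mul_add_one_eq
    (hslope : ∀ t, plSlope n σ σlast t = 1 ∨ plSlope n σ σlast t = -1) (m : ℕ) :
    ∃ z : ℤ, plVal n σ σlast (2 * m + 1) = z := by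
  obtain ⟨k, hodd, hk⟩ := exists_two_mul_plVal_eq hslope (2 * m + 1)
  obtain ⟨z, rfl⟩ : Even k := by
    have : Odd (k + 2 * m + 1 : ℤ) := by simpa [add_assoc] using hodd
    simpa [Int.odd_add, parity_simps] using this
  exact ⟨z, by push_cast at hk; linarith⟩

end

/-- Under (C1) `σ_{1,1} = 1` and (C2) `σ_{j,2} = 1 ⟹ σ_{j+1,1} = 1`: every point where
`g` attains its maximum `M` over `[0, n+1/2]` has the form `m + 1/2` with `0 ≤ m ≤ n`,
the segment after it satisfies `σ_{m+1} = (1,-1)` (resp. `σ_{n+1} = 1` if `m = n`),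
and `M` is a nonnegative integer. -/
theorem pl_max_at_half_integers (n : ℕ) (σ : Fin n → ℤ × ℤ) (σlast : ℤ)
    (hσ : ∀ j : Fin n, ((σ j).1 = 1 ∨ (σ j).1 = -1) ∧ ((σ j).2 = 1 ∨ (σ j).2 = -1))
    (hlast : σlast = 1 ∨ σlast = -1)
    (hC1 : (sigFull n σ σlast 0).1 = 1)
    (hC2 : ∀ j < n, (sigFull n σ σlast j).2 = 1 → (sigFull n σ σlast (j + 1)).1 = 1)
    (M : ℝ)
    (hM : IsGreatest (plFun n σ σlast '' Set.Icc 0 ((n : ℝ) + 1/2)) M) :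
    (∀ x ∈ Set.Icc (0 : ℝ) ((n : ℝ) + 1/2), plFun n σ σlast x = M →
      ∃ m : ℕ, m ≤ n ∧ x = (m : ℝ) + 1/2 ∧
        (m < n → sigFull n σ σlast m = (1, -1)) ∧ (m = n → σlast = 1)) ∧
    ∃ z : ℕ, M = (z : ℝ) := by
  have hslope := plSlope_eq_one_or_neg_one hσ hlast
  have hle : ∀ t ≤ 2 * n + 1, plVal n σ σlast t ≤ M := fun t ht =>
    hM.2 ⟨_, half_mem_Icc ht, plFun_half t⟩
  have hmax : ∀ x ∈ Set.Icc (0 : ℝ) ((n : ℝ) + 1/2), plFun n σ σlast x = M →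
      ∃ m : ℕ, m ≤ n ∧ x = (m : ℝ) + 1/2 ∧
        (m < n → sigFull n σ σlast m = (1, -1)) ∧ (m = n → σlast = 1) := by
    intro x hx hxM
    obtain ⟨t, ht, rfl⟩ := exists_eq_half_of_forall_plVal_le
      (fun t _ => by rcases hslope t with h | h <;> omega) hx (hxM ▸ hle)
    rw [plFun_half] at hxM
    obtain ⟨m, hm, rfl, hsig⟩ :=
      exists_eq_two_mul_add_one_of_forall_plVal_le hslope hC1 hC2 ht (hxM ▸ hle)
    exact ⟨m, hm, by push_cast; ring, hsig⟩
  refine ⟨hmax, ?_⟩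
  obtain ⟨x, hx, hxM⟩ := hM.1
  obtain ⟨m, -, rfl, -⟩ := hmax x hx hxM
  obtain ⟨z, hz⟩ := exists_plVal_two_mul_add_one_eq hslope m
  rw [plFun_nat_add_half, hz] at hxM
  have hz0 : (0 : ℝ) ≤ z := hxM ▸ plVal_one hC1 ▸ hle 1 (by omega)
  lift z to ℕ using by exact_mod_cast hz0
  exact ⟨z, by rw [← hxM]; rfl⟩
end

section
/- A column-strict filling C = x_1…x_r of a height-r column with entries in {1 < … < n < n̄ < … < 1̄} is a Kashiwara–Nakashima column (i.e., contains no pair (z, z̄) with z = x_p, z̄ = x_q and q − p ≤ r − z) if and only if it can be split: writing I = {z_1 > … > z_k} for the unbarred letters z such that both z and z̄ occur in C, there exist unbarred letters t_1 > … > t_k with t_1 the greatest letter < z_1 such that neither t_1 nor t̄_1 is in C, and inductively t_i the greatest letter < min(t_{i−1}, z_i) with neither t_i nor t̄_i in C. -/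
/-!
If `z = x_p` and `z̄ = x_q` (positions counted from `1`), then `p` entries of `C` are `≤ z`
and `r - q + 1` are `≥ z̄`, so the Kashiwara–Nakashima condition at `z` reads
`p + (r - q + 1) ≤ z`. Counting the letters `1, …, z` by inclusion–exclusion,
`p + (r - q + 1) = z - F(z) + P(z)`, where `F(z)` is the number of free letters below `z`
(neither `t` nor `t̄` in `C`) and `P(z)` the number of paired letters `≤ z`. As
`P(z_i) = k - i + 1`, `C` is a KN column iff there are at least `k - i + 1` free letters below
each `z_i`. A splitting provides them: `t_i > … > t_k` are free and lie below `z_i`. Conversely,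
under this counting condition the greedy choice never gets stuck, since each step uses up
exactly one free letter below the current bound.
-/

/- Letters of the alphabet `1 < … < n < n̄ < … < 1̄` are encoded as `1, …, 2n`:
the unbarred letter `z` (`1 ≤ z ≤ n`) is `z`, and the barred letter `z̄` is `2n+1-z`. -/

/-- A column of height `r`: a strictly increasing filling with entries in the
`2n`-letter alphabet. -/
def IsColumn (n r : ℕ) (C : Fin r → ℕ) : Prop :=
  StrictMono C ∧ ∀ p, 1 ≤ C p ∧ C p ≤ 2 * n

/-- The Kashiwara–Nakashima condition: no pair `(z, z̄)` with `z = x_p`, `z̄ = x_q`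
and `q - p ≤ r - z` (positions `1`-based; here `p, q` are `0`-based). -/
def IsKN (n r : ℕ) (C : Fin r → ℕ) : Prop :=
  ¬ ∃ (z : ℕ) (p q : Fin r), 1 ≤ z ∧ z ≤ n ∧ C p = z ∧ C q = 2 * n + 1 - z ∧
    (q : ℤ) - (p : ℤ) ≤ (r : ℤ) - (z : ℤ)

/-- The set `I = {z : both z and z̄ occur in C}` of unbarred letters. -/
def pairSet (n r : ℕ) (C : Fin r → ℕ) : Finset ℕ :=
  (Finset.Icc 1 n).filter (fun z => (∃ p, C p = z) ∧ ∃ q, C q = 2 * n + 1 - z)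

/-- `I` listed decreasingly: `z_1 > z_2 > … > z_k`. -/
def zList (n r : ℕ) (C : Fin r → ℕ) : List ℕ :=
  ((pairSet n r C).sort (· ≤ ·)).reverse

/-- `ts` is a splitting sequence for `C`: `t_1` is the greatest letter `< z_1` with
`t_1, t̄_1 ∉ C`, and inductively `t_i` is the greatest letter `< min(t_{i-1}, z_i)`
with `t_i, t̄_i ∉ C`. -/
def IsSplitting (n r : ℕ) (C : Fin r → ℕ) (ts : List ℕ) : Prop :=
  ts.length = (zList n r C).length ∧
  ∀ i < ts.length,
    IsGreatest {t : ℕ | 1 ≤ t ∧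
      t < (if i = 0 then (zList n r C)[0]! else min (ts[i-1]!) ((zList n r C)[i]!)) ∧
      (∀ p, C p ≠ t) ∧ (∀ p, C p ≠ 2 * n + 1 - t)} (ts[i]!)

/-- `C` can be split. -/
def CanSplit (n r : ℕ) (C : Fin r → ℕ) : Prop :=
  ∃ ts : List ℕ, IsSplitting n r C ts

open Finset

section GreedySelection

def IsGreedySelection (P : ℕ → Prop) (zs ts : List ℕ) : Prop :=
  ts.length = zs.length ∧ ∀ i < ts.length,
    IsGreatest {t | t < (if i = 0 then zs[0]! else min ts[i-1]! zs[i]!) ∧ P t} ts[i]!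

variable {P : ℕ → Prop}

namespace IsGreedySelection

variable {zs ts : List ℕ}

lemma getElem_lt_bound (h : IsGreedySelection P zs ts) (j : ℕ) (hj : j < ts.length) :
    ts[j] < (if j = 0 then zs[0]! else min ts[j-1]! zs[j]!) ∧ P ts[j] := by
  simpa [getElem!_pos ts j hj] using (h.2 j hj).1

lemma getElem_lt_getElem (h : IsGreedySelection P zs ts) (j : ℕ) (hj : j < ts.length) :
    ts[j] < zs[j]'(h.1 ▸ hj) := by
  have hlt := (h.getElem_lt_bound j hj).1
  rw [getElem!_pos zs j (h.1 ▸ hj)] at hlt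
  split_ifs at hlt with hj0
  · subst hj0
    simpa [getElem!_pos zs 0 (h.1 ▸ hj)] using hlt
  · exact lt_of_lt_of_le hlt (min_le_right _ _)

lemma pairwise_gt (h : IsGreedySelection P zs ts) : ts.Pairwise (· > ·) := by
  refine List.IsChain.pairwise (List.isChain_iff_getElem.mpr fun j hj => ?_)
  have hlt := (h.getElem_lt_bound (j + 1) hj).1
  rw [if_neg j.succ_ne_zero, Nat.add_sub_cancel, getElem!_pos ts j (by omega)] at hlt
  exact lt_of_lt_of_le hlt (min_le_left _ _)

lemma length_sub_le_count [DecidablePred P] (h : IsGreedySelection P zs ts) (i : ℕ)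
    (hi : i < zs.length) : zs.length - i ≤ Nat.count P zs[i] := by
  have hi' : i < ts.length := h.1 ▸ hi
  have hsub : (ts.drop i).toFinset ⊆ {t ∈ range zs[i] | P t} := by
    intro t ht
    obtain ⟨m, hm, rfl⟩ := List.mem_iff_getElem.mp (List.mem_toFinset.mp ht)
    simp only [List.getElem_drop, List.length_drop] at hm ⊢
    have hle : ts[i + m] ≤ ts[i] := by
      rcases m.eq_zero_or_pos with rfl | hm0
      · rfl
      · exact (List.pairwise_iff_getElem.mp h.pairwise_gt i (i + m) hi' (by omega) (by omega)).le
    simp only [mem_filter, mem_range]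
    exact ⟨lt_of_le_of_lt hle (h.getElem_lt_getElem i hi'), (h.getElem_lt_bound _ _).2⟩
  have hnd : (ts.drop i).Nodup := (List.drop_sublist _ _).nodup (h.pairwise_gt.imp ne_of_gt)
  calc zs.length - i = #(ts.drop i).toFinset := by
        rw [List.toFinset_card_of_nodup hnd, List.length_drop, h.1]
    _ ≤ #{t ∈ range zs[i] | P t} := card_le_card hsub
    _ = Nat.count P zs[i] := (Nat.count_eq_card_filter_range P _).symm

end IsGreedySelection

variable [DecidablePred P]

variable (P) in
def greatestBelow (b : ℕ) : ℕ := Nat.findGreatest P (b - 1)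

lemma isGreatest_greatestBelow {b : ℕ} (hb : 0 < Nat.count P b) :
    IsGreatest {t | t < b ∧ P t} (greatestBelow P b) := by
  obtain ⟨t, htb, hPt⟩ : ∃ t < b, P t := by
    simpa [Nat.count_eq_card_filter_range, Finset.card_pos, Finset.Nonempty] using hb
  refine ⟨⟨?_, Nat.findGreatest_spec (m := t) (by omega) hPt⟩, fun s ⟨hsb, hPs⟩ => ?_⟩
  · exact lt_of_le_of_lt (Nat.findGreatest_le _) (by omega)
  · exact Nat.le_findGreatest (by omega) hPs

lemma count_greatestBelow_add_one {b : ℕ} (hb : 0 < Nat.count P b) :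
    Nat.count P (greatestBelow P b) + 1 = Nat.count P b := by
  obtain ⟨⟨hlt, hP⟩, hmax⟩ := isGreatest_greatestBelow hb
  have hsucc : Nat.count P (greatestBelow P b + 1) = Nat.count P b := by
    simp only [Nat.count_eq_card_filter_range]
    congr 1
    ext t
    simp only [mem_filter, mem_range]
    exact ⟨fun ⟨ht, hPt⟩ => ⟨by omega, hPt⟩,
      fun ⟨ht, hPt⟩ => ⟨Nat.lt_succ_of_le (hmax ⟨ht, hPt⟩), hPt⟩⟩
  rw [← hsucc, Nat.count_succ, if_pos hP]

variable (P) in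
def greedyBound (zs : List ℕ) : ℕ → ℕ
  | 0 => zs[0]!
  | i + 1 => min (greatestBelow P (greedyBound zs i)) zs[i + 1]!

section

variable {zs : List ℕ} (hzs : ∀ i (hi : i < zs.length), zs.length - i ≤ Nat.count P zs[i])
include hzs

lemma length_sub_le_count_greedyBound :
    ∀ i < zs.length, zs.length - i ≤ Nat.count P (greedyBound P zs i)
  | 0, hi => by simpa [greedyBound, getElem!_pos zs 0 hi] using hzs 0 hi
  | i + 1, hi => by
    have hprev := length_sub_le_count_greedyBound i (by omega)
    have hstep := count_greatestBelow_add_one (P := P) (b := greedyBound P zs i) (by omega)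
    have hnext := hzs (i + 1) hi
    rw [greedyBound, getElem!_pos zs (i + 1) hi]
    rcases min_choice (greatestBelow P (greedyBound P zs i)) zs[i + 1] with hmin | hmin <;>
      rw [hmin] <;> omega

lemma isGreedySelection_greedy :
    IsGreedySelection P zs ((List.range zs.length).map (greatestBelow P ∘ greedyBound P zs)) := by
  refine ⟨by simp, fun i hi => ?_⟩
  rw [List.length_map, List.length_range] at hi
  have hbound : (if i = 0 then zs[0]! else
      min ((List.range zs.length).map (greatestBelow P ∘ greedyBound P zs))[i - 1]! zs[i]!) =
      greedyBound P zs i := by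
    rcases i with _ | i
    · rfl
    · rw [if_neg i.succ_ne_zero, Nat.add_sub_cancel, getElem!_pos _ i (by simp; omega)]
      simp [greedyBound]
  rw [hbound, getElem!_pos _ i (by simpa using hi)]
  simpa using isGreatest_greatestBelow
    (by have := length_sub_le_count_greedyBound hzs i hi; omega)

end

theorem exists_isGreedySelection_iff {zs : List ℕ} :
    (∃ ts, IsGreedySelection P zs ts) ↔
      ∀ i (hi : i < zs.length), zs.length - i ≤ Nat.count P zs[i] :=
  ⟨fun ⟨_, h⟩ => h.length_sub_le_count, fun hzs => ⟨_, isGreedySelection_greedy hzs⟩⟩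

end GreedySelection

def IsFreeLetter (n r : ℕ) (C : Fin r → ℕ) (t : ℕ) : Prop :=
  1 ≤ t ∧ (∀ p, C p ≠ t) ∧ ∀ p, C p ≠ 2 * n + 1 - t

instance (n r : ℕ) (C : Fin r → ℕ) : DecidablePred (IsFreeLetter n r C) := fun _ => by
  unfold IsFreeLetter; infer_instance

section Column

variable {n r : ℕ} {C : Fin r → ℕ}

lemma card_occurring_Icc (hC : IsColumn n r C) (p : Fin r) :
    #{w ∈ Icc 1 (C p) | ∃ j, C j = w} = p + 1 := by
  have : {w ∈ Icc 1 (C p) | ∃ j, C j = w} = (Iic p).image C := by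
    ext w
    simp only [mem_filter, mem_Icc, mem_image, mem_Iic]
    constructor
    · rintro ⟨⟨-, hw⟩, j, rfl⟩
      exact ⟨j, hC.1.le_iff_le.mp hw, rfl⟩
    · rintro ⟨j, hj, rfl⟩
      exact ⟨⟨(hC.2 j).1, hC.1.monotone hj⟩, j, rfl⟩
  rw [this, card_image_of_injective _ hC.1.injective, Fin.card_Iic]

lemma card_occurring_bar_Icc (hC : IsColumn n r C) {z : ℕ} {q : Fin r}
    (hq : C q = 2 * n + 1 - z) :
    #{w ∈ Icc 1 z | ∃ j, C j = 2 * n + 1 - w} = r - q := by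
  have : {w ∈ Icc 1 z | ∃ j, C j = 2 * n + 1 - w} = (Ici q).image (2 * n + 1 - C ·) := by
    ext w
    simp only [mem_filter, mem_Icc, mem_image, mem_Ici]
    constructor
    · rintro ⟨⟨hw1, hwz⟩, j, hj⟩
      have := hC.2 j
      exact ⟨j, hC.1.le_iff_le.mp (by omega), by omega⟩
    · rintro ⟨j, hj, rfl⟩
      have := hC.1.monotone hj
      have := hC.2 j
      exact ⟨⟨by omega, by omega⟩, j, by omega⟩
  rw [this, card_image_of_injOn, Fin.card_Ici]
  intro a _ b _ hab
  have := (hC.2 a).2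
  have := (hC.2 b).2
  exact hC.1.injective (by simp only at hab; omega)

lemma isKN_iff_forall_mem_pairSet (hC : IsColumn n r C) :
    IsKN n r C ↔ ∀ z ∈ pairSet n r C,
      #{w ∈ Icc 1 z | ∃ j, C j = w} + #{w ∈ Icc 1 z | ∃ j, C j = 2 * n + 1 - w} ≤ z := by
  simp only [IsKN, pairSet, mem_filter, mem_Icc, not_exists, not_and, not_le, and_imp,
    forall_exists_index]
  refine forall_congr' fun z => ⟨fun h hz1 hzn p hp q hq => ?_, fun h p q hz1 hzn hp hq => ?_⟩
  · have := h p q hz1 hzn hp hq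
    subst hp
    rw [card_occurring_Icc hC, card_occurring_bar_Icc hC hq]
    omega
  · have := h hz1 hzn p hp q hq
    subst hp
    rw [card_occurring_Icc hC, card_occurring_bar_Icc hC hq] at this
    omega

lemma card_add_card_add_count_eq {z : ℕ} (hz : z ∈ pairSet n r C) :
    #{w ∈ Icc 1 z | ∃ j, C j = w} + #{w ∈ Icc 1 z | ∃ j, C j = 2 * n + 1 - w} +
      Nat.count (IsFreeLetter n r C) z = z + #{w ∈ pairSet n r C | w ≤ z} := by
  simp only [pairSet, mem_filter, mem_Icc] at hz
  have hinter : {w ∈ Icc 1 z | ∃ j, C j = w} ∩ {w ∈ Icc 1 z | ∃ j, C j = 2 * n + 1 - w} =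
      {w ∈ pairSet n r C | w ≤ z} := by
    ext w
    simp only [pairSet, mem_inter, mem_filter, mem_Icc]
    constructor
    · rintro ⟨⟨⟨hw1, hwz⟩, hw⟩, -, hw'⟩
      exact ⟨⟨⟨hw1, by omega⟩, hw, hw'⟩, hwz⟩
    · rintro ⟨⟨⟨hw1, -⟩, hw, hw'⟩, hwz⟩
      exact ⟨⟨⟨hw1, hwz⟩, hw⟩, ⟨hw1, hwz⟩, hw'⟩
  have hfree : (range z).filter (IsFreeLetter n r C) =
      {w ∈ Icc 1 z | ¬((∃ j, C j = w) ∨ ∃ j, C j = 2 * n + 1 - w)} := by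
    ext w
    simp only [IsFreeLetter, mem_filter, mem_range, mem_Icc, not_or, not_exists]
    constructor
    · rintro ⟨hwz, hw1, hw⟩
      exact ⟨⟨hw1, hwz.le⟩, hw⟩
    · rintro ⟨⟨hw1, hwz⟩, hw⟩
      refine ⟨lt_of_le_of_ne hwz ?_, hw1, hw⟩
      rintro rfl
      obtain ⟨j, hj⟩ := hz.2.1
      exact hw.1 j hj
  have hsplit := card_filter_add_card_filter_not (s := Icc 1 z)
    (fun w => (∃ j, C j = w) ∨ ∃ j, C j = 2 * n + 1 - w)
  rw [← card_union_add_card_inter, hinter, ← filter_or, Nat.count_eq_card_filter_range, hfree]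
  rw [Nat.card_Icc] at hsplit
  omega

lemma card_filter_le_getElem_reverse_sort {α : Type*} [LinearOrder α] (s : Finset α) {i : ℕ}
    (hi : i < (s.sort (· ≤ ·)).reverse.length) :
    #{w ∈ s | w ≤ (s.sort (· ≤ ·)).reverse[i]} = #s - i := by
  rw [List.length_reverse, length_sort] at hi
  have hj : #s - 1 - i < #s := by omega
  have hget : (s.sort (· ≤ ·)).reverse[i] = s.orderEmbOfFin rfl ⟨#s - 1 - i, hj⟩ := by
    simp [orderEmbOfFin_apply, List.getElem_reverse]
  have : {w ∈ s | w ≤ (s.sort (· ≤ ·)).reverse[i]} =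
      (Iic (⟨#s - 1 - i, hj⟩ : Fin #s)).image (s.orderEmbOfFin rfl) := by
    ext w
    rw [hget]
    simp only [mem_filter, mem_image, mem_Iic]
    constructor
    · rintro ⟨hw, hwle⟩
      obtain ⟨m, rfl⟩ : w ∈ Set.range (s.orderEmbOfFin rfl) := by simpa using hw
      exact ⟨m, (s.orderEmbOfFin rfl).le_iff_le.mp hwle, rfl⟩
    · rintro ⟨m, hm, rfl⟩
      exact ⟨orderEmbOfFin_mem s rfl m, (s.orderEmbOfFin rfl).le_iff_le.mpr hm⟩
  rw [this, card_image_of_injective _ (s.orderEmbOfFin rfl).injective, Fin.card_Iic]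
  simp only
  omega

lemma mem_pairSet_iff_mem_zList {z : ℕ} : z ∈ pairSet n r C ↔ z ∈ zList n r C := by
  simp [zList]

theorem isKN_iff_forall_length_sub_le_count (hC : IsColumn n r C) :
    IsKN n r C ↔ ∀ i (hi : i < (zList n r C).length),
      (zList n r C).length - i ≤ Nat.count (IsFreeLetter n r C) (zList n r C)[i] := by
  have hlen : (zList n r C).length = #(pairSet n r C) := by simp [zList]
  have hstep : ∀ i (hi : i < (zList n r C).length),
      (#{w ∈ Icc 1 (zList n r C)[i] | ∃ j, C j = w} +
        #{w ∈ Icc 1 (zList n r C)[i] | ∃ j, C j = 2 * n + 1 - w} ≤ (zList n r C)[i] ↔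
      (zList n r C).length - i ≤ Nat.count (IsFreeLetter n r C) (zList n r C)[i]) := by
    intro i hi
    have hid := card_add_card_add_count_eq (mem_pairSet_iff_mem_zList.mpr (List.getElem_mem hi))
    have hcard : #{w ∈ pairSet n r C | w ≤ (zList n r C)[i]} = #(pairSet n r C) - i :=
      card_filter_le_getElem_reverse_sort (pairSet n r C) hi
    omega
  rw [isKN_iff_forall_mem_pairSet hC]
  constructor
  · exact fun h i hi => (hstep i hi).mp (h _ (mem_pairSet_iff_mem_zList.mpr (List.getElem_mem hi)))
  · intro h z hz
    obtain ⟨i, hi, rfl⟩ := List.getElem_of_mem (mem_pairSet_iff_mem_zList.mp hz)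
    exact (hstep i hi).mpr (h i hi)

lemma isSplitting_iff_isGreedySelection {ts : List ℕ} :
    IsSplitting n r C ts ↔ IsGreedySelection (IsFreeLetter n r C) (zList n r C) ts := by
  simp only [IsSplitting, IsGreedySelection, IsFreeLetter, and_left_comm (a := _ < _)]

end Column

theorem isKN_iff_canSplit_general (n r : ℕ) (C : Fin r → ℕ)
    (hC : IsColumn n r C) :
    IsKN n r C ↔ CanSplit n r C := by
  rw [isKN_iff_forall_length_sub_le_count hC, CanSplit, ← exists_isGreedySelection_iff]
  simp only [isSplitting_iff_isGreedySelection]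

/-- A column is a Kashiwara–Nakashima column if and only if it can be split. -/
theorem isKN_iff_canSplit (n r : ℕ) (hr : r ≤ n) (C : Fin r → ℕ)
    (hC : IsColumn n r C) :
    IsKN n r C ↔ CanSplit n r C :=
  isKN_iff_canSplit_general n r C hC
end

section
/- Let C be a Kashiwara–Nakashima column of height r ≤ n with splitting (lC, rC) (defined via Sheats/Lecouvey splitting). For any unbarred letter x ∈ {1,…,n}, the column lC contains an element of {x, x̄} if and only if rC contains an element of {x, x̄}. -/
/-- The multiset of entries of `C`. -/
def colMultiset (r : ℕ) (C : Fin r → ℕ) : Multiset ℕ :=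
  (Finset.univ : Finset (Fin r)).val.map C

/-- The entries of `rC`: each `z̄_i` is replaced by `t̄_i`. -/
def rColumn (n r : ℕ) (C : Fin r → ℕ) (ts : List ℕ) : Multiset ℕ :=
  ((zList n r C).zip ts).foldl
    (fun s p => (2 * n + 1 - p.2) ::ₘ s.erase (2 * n + 1 - p.1)) (colMultiset r C)

/-- The entries of `lC`: each `z_i` is replaced by `t_i`. -/
def lColumn (n r : ℕ) (C : Fin r → ℕ) (ts : List ℕ) : Multiset ℕ :=
  ((zList n r C).zip ts).foldl
    (fun s p => p.2 ::ₘ s.erase p.1) (colMultiset r C)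

/- As multisets, `lC = C - {z_i} + {t_i}` and `rC = C - {z̄_i} + {t̄_i}`: erasing and inserting
one letter at a time yields the simultaneous replacement as soon as the erased letters form a
submultiset of `C`. Since `C` has distinct entries and every `t_i < z_i ≤ n`, each of
"`lC` meets `{x, x̄}`" and "`rC` meets `{x, x̄}`" then amounts to
"`x` is some `t_i`, or `C` meets `{x, x̄}`". -/

theorem List.foldl_cons_erase_eq_add_sub {α : Type*} [DecidableEq α] (L : List (α × α))
    {S : Multiset α} (hL : (L.map Prod.fst : Multiset α) ≤ S) :
    L.foldl (fun s p => p.2 ::ₘ s.erase p.1) S = ↑(L.map Prod.snd) + (S - ↑(L.map Prod.fst)) := by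
  induction L generalizing S with
  | nil => simp
  | cons p L ih =>
    rw [List.map_cons, ← Multiset.cons_coe] at hL
    have hle : (L.map Prod.fst : Multiset α) ≤ S.erase p.1 := by
      simpa using Multiset.erase_le_erase p.1 hL
    rw [List.foldl_cons, ih (hle.trans (Multiset.le_cons_self _ _)),
      Multiset.cons_sub_of_le _ hle, List.map_cons, List.map_cons, ← Multiset.cons_coe,
      ← Multiset.cons_coe, Multiset.sub_cons, Multiset.add_cons, Multiset.cons_add]

theorem List.bar_mem_map_bar_iff {n x : ℕ} {l : List ℕ} (hl : ∀ t ∈ l, t ≤ n) (hx : x ≤ n) :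
    2 * n + 1 - x ∈ l.map (2 * n + 1 - ·) ↔ x ∈ l := by
  refine ⟨fun h => ?_, List.mem_map_of_mem⟩
  obtain ⟨t, ht, htx⟩ := List.mem_map.mp h
  have := hl t ht
  exact (show t = x by omega) ▸ ht

theorem List.notMem_map_bar {n x : ℕ} {l : List ℕ} (hl : ∀ t ∈ l, t ≤ n) (hx : x ≤ n) :
    x ∉ l.map (2 * n + 1 - ·) := fun h => by
  obtain ⟨t, ht, htx⟩ := List.mem_map.mp h
  have := hl t ht
  omega

section Splitting

variable {n r : ℕ} {C : Fin r → ℕ} {ts : List ℕ}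

theorem mem_colMultiset {y : ℕ} : y ∈ colMultiset r C ↔ ∃ p, C p = y := by
  simp [colMultiset]

theorem colMultiset_nodup (hC : Function.Injective C) : (colMultiset r C).Nodup :=
  Finset.univ.nodup.map hC

theorem mem_zList {z : ℕ} :
    z ∈ zList n r C ↔
      (1 ≤ z ∧ z ≤ n) ∧ z ∈ colMultiset r C ∧ 2 * n + 1 - z ∈ colMultiset r C := by
  simp [zList, pairSet, mem_colMultiset]

theorem zList_nodup : (zList n r C).Nodup :=
  List.nodup_reverse.mpr (Finset.sort_nodup _ _)

theorem zList_getElem!_le (i : ℕ) : (zList n r C)[i]! ≤ n := by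
  by_cases hi : i < (zList n r C).length
  · rw [getElem!_pos _ i hi]
    exact (mem_zList.mp (List.getElem_mem hi)).1.2
  · simp [List.getElem?_eq_none (not_lt.mp hi)]

theorem IsSplitting.le_of_mem (hts : IsSplitting n r C ts) : ∀ t ∈ ts, t ≤ n := by
  intro t ht
  obtain ⟨i, hi, rfl⟩ := List.mem_iff_getElem.mp ht
  have hlt := (hts.2 i hi).1.2.1
  rw [getElem!_pos ts i hi] at hlt
  split_ifs at hlt with h0
  · subst h0; exact (hlt.trans_le (zList_getElem!_le 0)).le
  · exact (hlt.trans_le ((min_le_right _ _).trans (zList_getElem!_le i))).le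

theorem IsSplitting.lColumn_eq (hts : IsSplitting n r C ts) :
    lColumn n r C ts = ↑ts + (colMultiset r C - ↑(zList n r C)) := by
  have hfst := List.map_fst_zip (l₁ := zList n r C) hts.1.ge
  have hle : (zList n r C : Multiset ℕ) ≤ colMultiset r C :=
    (Multiset.le_iff_subset (Multiset.coe_nodup.mpr zList_nodup)).mpr fun _ hz =>
      (mem_zList.mp hz).2.1
  rw [lColumn, List.foldl_cons_erase_eq_add_sub _ (by rwa [hfst]), hfst,
    List.map_snd_zip hts.1.le]

theorem IsSplitting.rColumn_eq (hts : IsSplitting n r C ts) :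
    rColumn n r C ts = ↑(ts.map (2 * n + 1 - ·)) +
      (colMultiset r C - ↑((zList n r C).map (2 * n + 1 - ·))) := by
  set bar : ℕ → ℕ := (2 * n + 1 - ·)
  have hfst : (((zList n r C).zip ts).map (Prod.map bar bar)).map Prod.fst =
      (zList n r C).map bar := by
    rw [List.map_map, Prod.map_fst', ← List.map_map, List.map_fst_zip hts.1.ge]
  have hsnd : (((zList n r C).zip ts).map (Prod.map bar bar)).map Prod.snd = ts.map bar := by
    rw [List.map_map, Prod.map_snd', ← List.map_map, List.map_snd_zip hts.1.le]
  have hnodup : ((zList n r C).map bar).Nodup :=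
    zList_nodup.map_on fun u hu v hv huv => by
      have := (mem_zList.mp hu).1; have := (mem_zList.mp hv).1; simp only [bar] at huv; omega
  have hle : ((zList n r C).map bar : Multiset ℕ) ≤ colMultiset r C :=
    (Multiset.le_iff_subset (Multiset.coe_nodup.mpr hnodup)).mpr fun y hy => by
      obtain ⟨z, hz, rfl⟩ := List.mem_map.mp hy
      exact (mem_zList.mp hz).2.2
  have hfold : rColumn n r C ts = (((zList n r C).zip ts).map (Prod.map bar bar)).foldl
      (fun s p => p.2 ::ₘ s.erase p.1) (colMultiset r C) := by
    rw [List.foldl_map]; rfl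
  rw [hfold, List.foldl_cons_erase_eq_add_sub _ (by rwa [hfst]), hfst, hsnd]

variable {x : ℕ}

theorem mem_lColumn_or_iff (hC : Function.Injective C) (hts : IsSplitting n r C ts)
    (hx : x ≤ n) :
    (x ∈ lColumn n r C ts ∨ 2 * n + 1 - x ∈ lColumn n r C ts) ↔
      x ∈ ts ∨ x ∈ colMultiset r C ∨ 2 * n + 1 - x ∈ colMultiset r C := by
  have hbar_ts : 2 * n + 1 - x ∉ ts := fun h => by have := hts.le_of_mem _ h; omega
  have hbar_gt : ¬ 2 * n + 1 - x ≤ n := by omega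
  rw [hts.lColumn_eq]
  simp only [Multiset.mem_add, Multiset.mem_coe, Multiset.mem_sub_of_nodup (colMultiset_nodup hC),
    mem_zList]
  tauto

theorem mem_rColumn_or_iff (hC : Function.Injective C) (hts : IsSplitting n r C ts)
    (hx : x ≤ n) :
    (x ∈ rColumn n r C ts ∨ 2 * n + 1 - x ∈ rColumn n r C ts) ↔
      x ∈ ts ∨ x ∈ colMultiset r C ∨ 2 * n + 1 - x ∈ colMultiset r C := by
  have hZ : ∀ z ∈ zList n r C, z ≤ n := fun z hz => (mem_zList.mp hz).1.2
  rw [hts.rColumn_eq]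
  simp only [Multiset.mem_add, Multiset.mem_coe, Multiset.mem_sub_of_nodup (colMultiset_nodup hC),
    List.bar_mem_map_bar_iff hts.le_of_mem hx, List.bar_mem_map_bar_iff hZ hx, mem_zList]
  have hx_ts := List.notMem_map_bar hts.le_of_mem hx
  have hx_Z := List.notMem_map_bar hZ hx
  tauto

end Splitting

theorem lC_rC_pair_membership_general (n r : ℕ) (C : Fin r → ℕ)
    (hC : IsColumn n r C)
    (ts : List ℕ) (hts : IsSplitting n r C ts)
    (x : ℕ) (hx2 : x ≤ n) :
    (x ∈ lColumn n r C ts ∨ (2 * n + 1 - x) ∈ lColumn n r C ts) ↔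
      (x ∈ rColumn n r C ts ∨ (2 * n + 1 - x) ∈ rColumn n r C ts) :=
  (mem_lColumn_or_iff hC.1.injective hts hx2).trans
    (mem_rColumn_or_iff hC.1.injective hts hx2).symm

/-- For a KN column `C` with splitting `(lC, rC)` and any unbarred letter `x`,
`lC` contains an element of `{x, x̄}` iff `rC` contains an element of `{x, x̄}`. -/
theorem lC_rC_pair_membership (n r : ℕ) (hr : r ≤ n) (C : Fin r → ℕ)
    (hC : IsColumn n r C) (hKN : IsKN n r C)
    (ts : List ℕ) (hts : IsSplitting n r C ts)
    (x : ℕ) (hx1 : 1 ≤ x) (hx2 : x ≤ n) :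
    (x ∈ lColumn n r C ts ∨ (2 * n + 1 - x) ∈ lColumn n r C ts) ↔
      (x ∈ rColumn n r C ts ∨ (2 * n + 1 - x) ∈ rColumn n r C ts) :=
  lC_rC_pair_membership_general n r C hC ts hts x hx2
end
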